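/- Let g₁ ≠ g₂ be lines in ℝ² and let C₁ ≠ C₂ be points with C₁, C₂ ∉ g₁ ∪ g₂. Suppose the line ℓ through C₁ and C₂ meets g₁ at a point D₁ and meets g₂ at a point D₂, with D₁, D₂, C₁, C₂ pairwise distinct. Then, for a positive integer n, there exists a closed polygonal line with n sides, not all of whose vertices are collinear, whose vertices lie alternately on g₁ and g₂ (consecutive vertices distinct) and whose consecutive side lines alternately pass through C₁ and C₂, if and only if n = 4 and the pair (D₁, D₂) is harmonically conjugate to the pair (C₁, C₂), i.e., the cross-ratio (C₁, C₂; D₁, D₂) equals −1. -/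

import Mathlib

/-- The line through two (distinct) points of `ℝ²`, as a set. -/
def lineThrough (A B : ℝ × ℝ) : Set (ℝ × ℝ) := {p | ∃ t : ℝ, p = A + t • (B - A)}

/-- A subset of `ℝ²` is a line. -/
def IsLine (L : Set (ℝ × ℝ)) : Prop :=
  ∃ u v w : ℝ, ¬ (u = 0 ∧ v = 0) ∧ L = {p : ℝ × ℝ | u * p.1 + v * p.2 + w = 0}

noncomputable def det2 (v w : ℝ × ℝ) : ℝ := v.1 * w.2 - v.2 * w.1

lemma det2_of_mem {A B C : ℝ × ℝ} (h : C ∈ lineThrough A B) : det2 (B - A) (C - A) = 0 := by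
  obtain ⟨t, rfl⟩ := h
  simp [det2]
  ring

lemma exists_smul_of_det2 {u w : ℝ × ℝ} (hu : u ≠ 0) (h : det2 u w = 0) : ∃ t : ℝ, w = t • u := by
  simp only [det2] at h
  rcases eq_or_ne u.1 0 with h1 | h1
  · have h2 : u.2 ≠ 0 := fun h2 => hu (Prod.ext h1 h2)
    have hw1 : w.1 = 0 := by
      rw [h1] at h
      have : u.2 * w.1 = 0 := by linarith
      exact (mul_eq_zero.1 this).resolve_left h2
    exact ⟨w.2 / u.2, Prod.ext (by simp [hw1, h1]) (by rw [Prod.smul_snd, smul_eq_mul, div_mul_cancel₀ _ h2])⟩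
  · refine ⟨w.1 / u.1, Prod.ext (by rw [Prod.smul_fst, smul_eq_mul, div_mul_cancel₀ _ h1]) ?_⟩
    have : w.2 = u.2 * w.1 / u.1 := by field_simp; linarith
    simp [this]; field_simp

lemma mem_of_det2 {A B C : ℝ × ℝ} (hAB : A ≠ B) (h : det2 (B - A) (C - A) = 0) :
    C ∈ lineThrough A B := by
  obtain ⟨t, ht⟩ := exists_smul_of_det2 (sub_ne_zero.2 hAB.symm) h
  exact ⟨t, by rw [← ht]; abel⟩

lemma mem_lineThrough_iff {A B C : ℝ × ℝ} (hAB : A ≠ B) :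
    C ∈ lineThrough A B ↔ det2 (B - A) (C - A) = 0 :=
  ⟨det2_of_mem, mem_of_det2 hAB⟩

lemma left_mem_lineThrough {A B : ℝ × ℝ} : A ∈ lineThrough A B := ⟨0, by simp⟩
lemma right_mem_lineThrough {A B : ℝ × ℝ} : B ∈ lineThrough A B := ⟨1, by simp⟩

lemma line_param {L : Set (ℝ × ℝ)} {D : ℝ × ℝ} (hL : IsLine L) (hD : D ∈ L) :
    ∃ u : ℝ × ℝ, u ≠ 0 ∧ L = {p | ∃ t : ℝ, p = D + t • u} := by
  obtain ⟨a, b, c, hab, rfl⟩ := hL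
  refine ⟨(-b, a), ?_, ?_⟩
  · intro h
    rw [Prod.ext_iff] at h
    exact hab ⟨h.2, by simpa using h.1⟩
  · ext p
    simp only [Set.mem_setOf_eq] at hD ⊢
    constructor
    · intro hp
      rcases eq_or_ne a 0 with ha | ha
      · have hb : b ≠ 0 := fun hb => hab ⟨ha, hb⟩
        rw [ha] at hp hD
        refine ⟨-(p.1 - D.1) / b, Prod.ext (by simp only [Prod.fst_add, Prod.smul_fst, smul_eq_mul]; rw [neg_div, neg_mul_neg, div_mul_cancel₀ _ hb]; ring) (by
          simp [ha]
          exact mul_left_cancel₀ hb (by linarith))⟩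
      · refine ⟨(p.2 - D.2) / a, Prod.ext ?_ (by simp only [Prod.snd_add, Prod.smul_snd, smul_eq_mul]; rw [div_mul_cancel₀ _ ha]; ring)⟩
        simp only [Prod.fst_add, Prod.smul_fst, smul_eq_mul]
        field_simp
        nlinarith [hp, hD]
    · rintro ⟨t, rfl⟩
      simp only [Prod.fst_add, Prod.snd_add, Prod.smul_fst, Prod.smul_snd, smul_eq_mul]
      nlinarith [hD]

lemma isLine_lineThrough {A B : ℝ × ℝ} (hAB : A ≠ B) : IsLine (lineThrough A B) := by
  refine ⟨-(B.2 - A.2), B.1 - A.1, (B.2 - A.2) * A.1 - (B.1 - A.1) * A.2, ?_, ?_⟩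
  · rintro ⟨h1, h2⟩
    apply hAB
    have e1 : B.2 = A.2 := by linarith
    have e2 : B.1 = A.1 := by linarith
    exact (Prod.ext e2.symm e1.symm : A = B)
  · ext p
    rw [Set.mem_setOf_eq, show (p ∈ lineThrough A B) ↔ _ from mem_lineThrough_iff hAB]
    constructor <;> intro h <;>
      (simp only [det2, Prod.fst_sub, Prod.snd_sub] at * ; linear_combination h)

lemma line_eq_lineThrough {L : Set (ℝ × ℝ)} {X Y : ℝ × ℝ} (hL : IsLine L)
    (hX : X ∈ L) (hY : Y ∈ L) (hXY : X ≠ Y) : L = lineThrough X Y := by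
  obtain ⟨u, hu, rfl⟩ := line_param hL hX
  obtain ⟨t₀, ht₀⟩ := hY
  have ht0 : t₀ ≠ 0 := by
    rintro rfl; exact hXY (by simpa using ht₀.symm)
  ext p
  constructor
  · rintro ⟨t, rfl⟩
    exact ⟨t / t₀, by rw [ht₀]; simp [smul_smul]; rw [div_mul_cancel₀ _ ht0]⟩
  · rintro ⟨t, rfl⟩
    exact ⟨t * t₀, by rw [ht₀]; simp [smul_smul]⟩

lemma lineThrough_comm {A B : ℝ × ℝ} (hAB : A ≠ B) : lineThrough A B = lineThrough B A :=
  line_eq_lineThrough (isLine_lineThrough hAB) right_mem_lineThrough left_mem_lineThrough hAB.symm |>.symm ▸ rfl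

lemma collinear_of_subset_lineThrough {S : Set (ℝ × ℝ)} {A B : ℝ × ℝ}
    (h : S ⊆ lineThrough A B) : Collinear ℝ S := by
  apply (collinear_iff_exists_forall_eq_smul_vadd (k := ℝ) (s := S)).2
  refine ⟨A, B - A, fun p hp => ?_⟩
  obtain ⟨t, ht⟩ := h hp
  exact ⟨t, by rw [ht]; simp [add_comm]⟩

lemma det2_expand (e u u' : ℝ × ℝ) (s a s' b : ℝ) :
    det2 ((s' • e + b • u') - (s • e + a • u)) (-(s • e + a • u)) =
      s * b * det2 e u' + s' * a * det2 u e + a * b * det2 u u' := by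
  simp only [det2, Prod.fst_sub, Prod.snd_sub, Prod.fst_add, Prod.snd_add, Prod.fst_neg,
    Prod.snd_neg, Prod.smul_fst, Prod.smul_snd, smul_eq_mul]
  ring

lemma det2_expand' (C e u u' : ℝ × ℝ) (s a s' b : ℝ) :
    det2 ((C + (s' • e + b • u')) - (C + (s • e + a • u))) (C - (C + (s • e + a • u))) =
      s * b * det2 e u' + s' * a * det2 u e + a * b * det2 u u' := by
  simp only [det2, Prod.fst_sub, Prod.snd_sub, Prod.fst_add, Prod.snd_add,
    Prod.smul_fst, Prod.smul_snd, smul_eq_mul]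
  ring

lemma core_forward (g g' : Set (ℝ × ℝ)) (hl : IsLine g) (hl' : IsLine g') (hgg' : g ≠ g')
    (C C' D D' : ℝ × ℝ) (hCC' : C ≠ C')
    (hCg : C ∉ g) (hCg' : C ∉ g') (hC'g : C' ∉ g) (hC'g' : C' ∉ g')
    (hDg : D ∈ g) (hD'g' : D' ∈ g')
    (hDD' : D ≠ D') (hDC : D ≠ C) (hDC' : D ≠ C') (hD'C : D' ≠ C) (hD'C' : D' ≠ C')
    (s₁ s₂ : ℝ) (hs₁ : D = C + s₁ • (C' - C)) (hs₂ : D' = C + s₂ • (C' - C))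
    (n : ℕ) (hn : 0 < n)
    (A : ℕ → ℝ × ℝ) (hper : ∀ k, A (k + n) = A k)
    (hmin : ∀ j, 0 < j → (∀ k, A (k + j) = A k) → n ≤ j)
    (hne : ∀ k, A k ≠ A (k + 1))
    (hmem : ∀ k, A (2 * k) ∈ g ∧ A (2 * k + 1) ∈ g')
    (hside : ∀ k, C ∈ lineThrough (A (2 * k)) (A (2 * k + 1)) ∧
      C' ∈ lineThrough (A (2 * k + 1)) (A (2 * k + 2)))
    (hnc : ¬ Collinear ℝ (Set.range A)) :
    n = 4 ∧ 2 * (s₁ * s₂) = s₁ + s₂ := by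
  set e : ℝ × ℝ := C' - C with he_def
  have he : e ≠ 0 := sub_ne_zero.2 hCC'.symm
  -- basic parameter facts
  have hs₁0 : s₁ ≠ 0 := by rintro rfl; exact hDC (by simpa using hs₁)
  have hs₂0 : s₂ ≠ 0 := by rintro rfl; exact hD'C (by simpa using hs₂)
  have hs₁1 : s₁ ≠ 1 := by rintro rfl; apply hDC'; rw [hs₁]; simp [he_def]
  have hs₂1 : s₂ ≠ 1 := by rintro rfl; apply hD'C'; rw [hs₂]; simp [he_def]
  -- the line ℓ
  have hlℓ : IsLine (lineThrough C C') := isLine_lineThrough hCC'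
  have hDℓ : D ∈ lineThrough C C' := ⟨s₁, hs₁⟩
  have hD'ℓ : D' ∈ lineThrough C C' := ⟨s₂, hs₂⟩
  have hDnotg' : D ∉ g' := by
    intro hm
    have h1 : g' = lineThrough D D' := line_eq_lineThrough hl' hm hD'g' hDD'
    have h2 : lineThrough C C' = lineThrough D D' := line_eq_lineThrough hlℓ hDℓ hD'ℓ hDD'
    exact hCg' (h1 ▸ h2 ▸ left_mem_lineThrough)
  have hD'notg : D' ∉ g := by
    intro hm
    have h1 : g = lineThrough D D' := line_eq_lineThrough hl hDg hm hDD'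
    have h2 : lineThrough C C' = lineThrough D D' := line_eq_lineThrough hlℓ hDℓ hD'ℓ hDD'
    exact hCg (h1 ▸ h2 ▸ left_mem_lineThrough)
  -- parametrizations
  obtain ⟨u, hu, hgp⟩ := line_param hl hDg
  obtain ⟨u', hu', hg'p⟩ := line_param hl' hD'g'
  set p : ℝ := det2 e u' with hp_def
  set q : ℝ := det2 u e with hq_def
  set r : ℝ := det2 u u' with hr_def
  have hp : p ≠ 0 := by
    intro h0
    have hd : det2 u' e = 0 := by
      have : det2 u' e = -det2 e u' := by simp [det2]; ring
      rw [this, ← hp_def, h0, neg_zero]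
    obtain ⟨t, ht⟩ := exists_smul_of_det2 hu' hd
    apply hCg'
    rw [hg'p]
    exact ⟨-(s₂ * t), by rw [show C = D' - s₂ • e by rw [hs₂]; abel, ht]; module⟩
  have hq : q ≠ 0 := by
    intro h0
    obtain ⟨t, ht⟩ := exists_smul_of_det2 hu (hq_def ▸ h0)
    apply hCg
    rw [hgp]
    exact ⟨-(s₁ * t), by rw [show C = D - s₁ • e by rw [hs₁]; abel, ht]; module⟩
  -- the parameters of the vertices
  have hex1 : ∀ k, ∃ t : ℝ, A (2 * k) = D + t • u := by
    intro k; have := (hmem k).1; rwa [hgp] at this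
  have hex2 : ∀ k, ∃ t : ℝ, A (2 * k + 1) = D' + t • u' := by
    intro k; have := (hmem k).2; rwa [hg'p] at this
  choose a ha using hex1
  choose b hb using hex2
  have hainj : ∀ {x y : ℝ}, D + x • u = D + y • u → x = y := by
    intro x y h
    have h1 : (x - y) • u = 0 := by
      have := add_left_cancel h
      rw [sub_smul, this, sub_self]
    exact sub_eq_zero.1 ((smul_eq_zero.1 h1).resolve_right hu)
  -- n is even
  have hneven : Even n := by
    by_contra hodd
    rw [Nat.not_even_iff_odd] at hodd
    obtain ⟨t, rfl⟩ := hodd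
    have hallg : ∀ j, A j ∈ g := by
      intro j
      rcases Nat.even_or_odd j with ⟨l, rfl⟩ | ⟨l, rfl⟩
      · have := (hmem l).1; rwa [two_mul] at this
      · have h1 : A (2 * l + 1 + (2 * t + 1)) = A (2 * l + 1) := hper _
        rw [← h1, show 2 * l + 1 + (2 * t + 1) = 2 * (l + t + 1) by ring]
        exact (hmem _).1
    have hallg' : ∀ j, A j ∈ g' := by
      intro j
      rcases Nat.even_or_odd j with ⟨l, rfl⟩ | ⟨l, rfl⟩
      · have h1 : A (l + l + (2 * t + 1)) = A (l + l) := hper _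
        rw [← h1, show l + l + (2 * t + 1) = 2 * (l + t) + 1 by ring]
        exact (hmem _).2
      · exact (hmem l).2
    have e1 : g = lineThrough (A 0) (A 1) :=
      line_eq_lineThrough hl (hallg 0) (hallg 1) (hne 0)
    have e2 : g' = lineThrough (A 0) (A 1) :=
      line_eq_lineThrough hl' (hallg' 0) (hallg' 1) (hne 0)
    exact hgg' (e1.trans e2.symm)
  obtain ⟨m, hm⟩ : ∃ m, n = 2 * m := by
    obtain ⟨t', ht'⟩ := hneven; exact ⟨t', by omega⟩
  -- n ≠ 2
  have hn2 : n ≠ 2 := by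
    rintro rfl
    have hsub : ∀ k, A k = A 0 ∨ A k = A 1 := by
      intro k
      induction k using Nat.strong_induction_on with
      | _ k ih =>
        match k with
        | 0 => exact Or.inl rfl
        | 1 => exact Or.inr rfl
        | (k + 2) => rw [hper k]; exact ih k (by omega)
    apply hnc
    apply collinear_of_subset_lineThrough (A := A 0) (B := A 1)
    rintro x ⟨j, rfl⟩
    rcases hsub j with h | h <;> rw [h]
    · exact left_mem_lineThrough
    · exact right_mem_lineThrough
  have hm2 : 2 ≤ m := by omega
  -- no vertex equals D
  have hstep1 : ∀ k, A (2 * k) = D → A (2 * k + 1) = D' := by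
    intro k hk
    have hXg' : A (2 * k + 1) ∈ g' := (hmem k).2
    have hDX : D ≠ A (2 * k + 1) := fun h => hDnotg' (h ▸ hXg')
    have hCmem : C ∈ lineThrough D (A (2 * k + 1)) := hk ▸ (hside k).1
    have hDmem : D ∈ lineThrough D (A (2 * k + 1)) := left_mem_lineThrough
    have hlx : lineThrough D (A (2 * k + 1)) = lineThrough C D := by
      exact line_eq_lineThrough (isLine_lineThrough hDX) hCmem hDmem hDC.symm
    have hlCD : lineThrough C C' = lineThrough C D :=
      line_eq_lineThrough hlℓ left_mem_lineThrough hDℓ hDC.symm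
    have hXl : A (2 * k + 1) ∈ lineThrough C C' := by
      rw [hlCD, ← hlx]; exact right_mem_lineThrough
    by_contra hne'
    have h1 : g' = lineThrough (A (2 * k + 1)) D' :=
      line_eq_lineThrough hl' hXg' hD'g' hne'
    have h2 : lineThrough C C' = lineThrough (A (2 * k + 1)) D' :=
      line_eq_lineThrough hlℓ hXl hD'ℓ hne'
    exact hCg' (h1 ▸ h2 ▸ left_mem_lineThrough)
  have hstep2 : ∀ k, A (2 * k + 1) = D' → A (2 * (k + 1)) = D := by
    intro k hk
    have hYg : A (2 * (k + 1)) ∈ g := (hmem (k + 1)).1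
    have hidx : 2 * (k + 1) = 2 * k + 2 := by ring
    have hD'Y : D' ≠ A (2 * (k + 1)) := fun h => hD'notg (h ▸ hYg)
    have hCmem : C' ∈ lineThrough D' (A (2 * (k + 1))) := by
      rw [hidx]; exact hk ▸ (hside k).2
    have hD'mem : D' ∈ lineThrough D' (A (2 * (k + 1))) := left_mem_lineThrough
    have hlx : lineThrough D' (A (2 * (k + 1))) = lineThrough C' D' :=
      line_eq_lineThrough (isLine_lineThrough hD'Y) hCmem hD'mem hD'C'.symm
    have hℓ2 : lineThrough C C' = lineThrough C' D' :=
      line_eq_lineThrough hlℓ right_mem_lineThrough hD'ℓ hD'C'.symm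
    have hYl : A (2 * (k + 1)) ∈ lineThrough C C' := by
      rw [hℓ2, ← hlx]; exact right_mem_lineThrough
    by_contra hne'
    have hne'' : A (2 * (k + 1)) ≠ D := fun h => hne' h
    have h1 : g = lineThrough (A (2 * (k + 1))) D :=
      line_eq_lineThrough hl hYg hDg hne''
    have h2 : lineThrough C C' = lineThrough (A (2 * (k + 1))) D :=
      line_eq_lineThrough hlℓ hYl hDℓ hne''
    exact hCg (h1 ▸ h2 ▸ left_mem_lineThrough)
  have hka : ∀ k, a k ≠ 0 := by
    intro K hK0
    have hK : A (2 * K) = D := by rw [ha K, hK0]; simp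
    have hall : ∀ i, A (2 * (K + i)) = D ∧ A (2 * (K + i) + 1) = D' := by
      intro i
      induction i with
      | zero => exact ⟨hK, hstep1 K hK⟩
      | succ i ih =>
        have h2 : A (2 * (K + i + 1)) = D := hstep2 _ ih.2
        rw [show K + (i + 1) = K + i + 1 by ring]
        exact ⟨h2, hstep1 _ h2⟩
    have hperN : ∀ N j, A (j + N * n) = A j := by
      intro N
      induction N with
      | zero => simp
      | succ N ih =>
        intro j
        rw [show j + (N + 1) * n = j + N * n + n by ring, hper, ih]
    apply hnc
    apply collinear_of_subset_lineThrough (A := C) (B := C')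
    rintro x ⟨j, rfl⟩
    have hj : A j = A (j + 2 * K * n) := (hperN (2 * K) j).symm
    have hge : 2 * K ≤ j + 2 * K * n := by
      calc 2 * K ≤ 2 * K * n := Nat.le_mul_of_pos_right _ hn
      _ ≤ j + 2 * K * n := by omega
    obtain ⟨i, hi⟩ : ∃ i, j + 2 * K * n = 2 * K + i := ⟨j + 2 * K * n - 2 * K, by omega⟩
    rw [hj, hi]
    rcases Nat.even_or_odd i with ⟨l, rfl⟩ | ⟨l, rfl⟩
    · rw [show 2 * K + (l + l) = 2 * (K + l) by ring, (hall l).1]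
      exact hDℓ
    · rw [show 2 * K + (2 * l + 1) = 2 * (K + l) + 1 by ring, (hall l).2]
      exact hD'ℓ
  -- incidence equations
  have hA1 : ∀ k, A (2 * k) = C + (s₁ • e + a k • u) := by
    intro k; rw [ha k, hs₁]; abel
  have hA2 : ∀ k, A (2 * k + 1) = C + (s₂ • e + b k • u') := by
    intro k; rw [hb k, hs₂]; abel
  have hA1' : ∀ k, A (2 * k) = C' + ((s₁ - 1) • e + a k • u) := by
    intro k
    rw [ha k, hs₁]
    have : C' = C + (1 : ℝ) • e := by simp [he_def]
    rw [this, sub_smul]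
    abel
  have hA2' : ∀ k, A (2 * k + 1) = C' + ((s₂ - 1) • e + b k • u') := by
    intro k
    rw [hb k, hs₂]
    have : C' = C + (1 : ℝ) • e := by simp [he_def]
    rw [this, sub_smul]
    abel
  have hR1 : ∀ k, s₁ * (b k) * p + s₂ * (a k) * q + (a k) * (b k) * r = 0 := by
    intro k
    have h0 := det2_of_mem (hside k).1
    rw [hA1 k, hA2 k, det2_expand' C e u u' s₁ (a k) s₂ (b k)] at h0
    exact h0
  have hR2 : ∀ k, (s₂ - 1) * (a (k + 1)) * (det2 e u) + (s₁ - 1) * (b k) * (det2 u' e)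
      + (b k) * (a (k + 1)) * (det2 u' u) = 0 := by
    intro k
    have h0 := det2_of_mem (hside k).2
    have hidx : 2 * k + 2 = 2 * (k + 1) := by ring
    rw [hidx] at h0
    rw [hA1' (k + 1), hA2' k, det2_expand' C' e u' u (s₂ - 1) (b k) (s₁ - 1) (a (k + 1))] at h0
    exact h0
  have hswap1 : det2 e u = -q := by simp [det2, hq_def]; ring
  have hswap2 : det2 u' e = -p := by simp [det2, hp_def]; ring
  have hswap3 : det2 u' u = -r := by simp [det2, hr_def]; ring
  have hR2' : ∀ k, (s₂ - 1) * q * (a (k + 1)) + (s₁ - 1) * p * (b k)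
      + r * (a (k + 1)) * (b k) = 0 := by
    intro k
    have := hR2 k
    rw [hswap1, hswap2, hswap3] at this
    linarith [this]
  set α : ℝ := s₂ * (s₁ - 1) * p with hα_def
  set δ : ℝ := s₁ * (s₂ - 1) * p with hδ_def
  have hα : α ≠ 0 := by
    simp only [hα_def]
    exact mul_ne_zero (mul_ne_zero hs₂0 (sub_ne_zero.2 hs₁1)) hp
  have hδ : δ ≠ 0 := by
    simp only [hδ_def]
    exact mul_ne_zero (mul_ne_zero hs₁0 (sub_ne_zero.2 hs₂1)) hp
  have key : ∀ k, δ * (a (k + 1)) - α * (a k) = r * (a k) * (a (k + 1)) := by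
    intro k
    have h0 : q * (δ * (a (k + 1)) - α * (a k) - r * (a k) * (a (k + 1))) = 0 := by
      simp only [hα_def, hδ_def]
      linear_combination (s₁ * p + r * (a k)) * hR2' k
        - ((s₁ - 1) * p + r * (a (k + 1))) * hR1 k
    have := (mul_eq_zero.1 h0).resolve_left hq
    linarith [this]
  set c : ℕ → ℝ := fun k => (a k)⁻¹ with hc_def
  have hc : ∀ k, α * c (k + 1) = δ * c k - r := by
    intro k
    have h1 := hka k
    have h2 := hka (k + 1)
    simp only [hc_def]
    field_simp
    linear_combination -key k
  have hcainj : ∀ {i j : ℕ}, c i = c j → a i = a j := by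
    intro i j h
    have h2 := congrArg (fun x : ℝ => x⁻¹) h
    simpa [hc_def, inv_inv] using h2
  -- periodicity of the parameters
  have haper : ∀ k, a (k + m) = a k := by
    intro k
    apply hainj
    rw [← ha (k + m), ← ha k, show 2 * (k + m) = 2 * k + n by omega, hper]
  have hcper : ∀ k, c (k + m) = c k := fun k => by simp only [hc_def, haper k]
  -- b is determined by a
  have hden : ∀ k, s₁ * p + r * (a k) ≠ 0 := by
    intro k h0
    have h1 : s₂ * (a k) * q = 0 := by linear_combination hR1 k - (b k) * h0
    rcases mul_eq_zero.1 h1 with h2 | h2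
    · rcases mul_eq_zero.1 h2 with h3 | h3
      · exact hs₂0 h3
      · exact hka k h3
    · exact hq h2
  have hbform : ∀ k, b k = -(s₂ * q * a k) / (s₁ * p + r * a k) := by
    intro k
    rw [eq_div_iff (hden k)]
    linear_combination hR1 k
  -- a 1 ≠ a 0
  have ha10 : a 1 ≠ a 0 := by
    intro h10
    have hc10' : c 1 = c 0 := by simp only [hc_def, h10]
    have hcall : ∀ k, c k = c 0 := by
      intro k
      induction k with
      | zero => rfl
      | succ k ih =>
        have h1 : α * c (k + 1) = α * c 1 := by rw [hc k, ih, ← hc 0]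
        have h2 : α * c (k + 1) = α * c 0 := h1.trans (by rw [hc10'])
        exact mul_left_cancel₀ hα h2
    have haall : ∀ k, a k = a 0 := fun k => hcainj (hcall k)
    have hball : ∀ k, b k = b 0 := by
      intro k; rw [hbform k, hbform 0, haall k]
    have hper2 : ∀ j, A (j + 2) = A j := by
      intro j
      rcases Nat.even_or_odd j with ⟨l, rfl⟩ | ⟨l, rfl⟩
      · rw [show l + l + 2 = 2 * (l + 1) by ring, show l + l = 2 * l by ring,
          ha (l + 1), ha l, haall (l + 1), haall l]
      · rw [show 2 * l + 1 + 2 = 2 * (l + 1) + 1 by ring, hb (l + 1), hb l,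
          hball (l + 1), hball l]
    have := hmin 2 (by norm_num) hper2
    omega
  have hc10 : c 1 ≠ c 0 := fun h => ha10 (hcainj h)
  -- closed form for the recursion
  set S : ℕ → ℝ := fun j => Nat.rec (motive := fun _ => ℝ) 0 (fun i s => δ * s + α ^ i) j
    with hS_def
  have hS0 : S 0 = 0 := rfl
  have hSsucc : ∀ j, S (j + 1) = δ * S j + α ^ j := fun j => rfl
  have closed : ∀ j k, α ^ j * c (k + j) = δ ^ j * c k - r * S j := by
    intro j
    induction j with
    | zero => intro k; simp [hS0]
    | succ j ih =>
      intro k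
      have h1 := hc (k + j)
      have h2 := ih k
      rw [hSsucc j, pow_succ, pow_succ, show k + (j + 1) = k + j + 1 by ring]
      linear_combination α ^ j * h1 + δ * h2
  have hclosed0 : (δ ^ m - α ^ m) * c 0 = r * S m := by
    have h1 := closed m 0
    rw [hcper 0] at h1
    linear_combination -h1
  have hclosed1 : (δ ^ m - α ^ m) * c 1 = r * S m := by
    have h1 := closed m 1
    rw [hcper 1] at h1
    linear_combination -h1
  have hpow : δ ^ m = α ^ m := by
    have h1 : (δ ^ m - α ^ m) * (c 0 - c 1) = 0 := by
      linear_combination hclosed0 - hclosed1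
    rcases mul_eq_zero.1 h1 with h2 | h2
    · linarith [sub_eq_zero.1 h2]
    · exact absurd (sub_eq_zero.1 h2).symm hc10
  have hrS : r * S m = 0 := by rw [← hclosed0, hpow]; ring
  -- δ = -α
  have habs : δ = α ∨ δ = -α := by
    have h1 : |δ| ^ m = |α| ^ m := by rw [← abs_pow, ← abs_pow, hpow]
    have hm0 : m ≠ 0 := by omega
    have h2 : |δ| = |α| := by
      rcases lt_trichotomy |δ| |α| with h | h | h
      · exact absurd h1 (ne_of_lt (pow_lt_pow_left₀ h (abs_nonneg _) hm0))
      · exact h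
      · exact absurd h1.symm (ne_of_lt (pow_lt_pow_left₀ h (abs_nonneg _) hm0))
    exact abs_eq_abs.1 h2
  have hδα : δ = -α := by
    rcases habs with hda | hda
    · exfalso
      have hαS : ∀ j, α * S j = j * α ^ j := by
        intro j
        induction j with
        | zero => simp [hS0]
        | succ j ih =>
          rw [hSsucc j, hda]
          push_cast
          rw [pow_succ]
          linear_combination α * ih
      have hSm : S m ≠ 0 := by
        intro h0
        have h1 := hαS m
        rw [h0, mul_zero] at h1
        have h2 : (m : ℝ) ≠ 0 := Nat.cast_ne_zero.2 (by omega)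
        exact (mul_ne_zero h2 (pow_ne_zero m hα)) h1.symm
      have hr0 : r = 0 := by
        rcases mul_eq_zero.1 hrS with h | h
        · exact h
        · exact absurd h hSm
      have h1 := key 0
      rw [hr0, hda] at h1
      apply ha10
      have h2 : α * (a 1 - a 0) = 0 := by linarith [h1]
      have := (mul_eq_zero.1 h2).resolve_left hα
      linarith [sub_eq_zero.1 this]
    · exact hda
  -- conclusion: harmonic
  have hharm : 2 * (s₁ * s₂) = s₁ + s₂ := by
    have h1 : (s₁ * (s₂ - 1) + s₂ * (s₁ - 1)) * p = 0 := by
      simp only [hδ_def, hα_def] at hδα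
      linear_combination hδα
    have h2 := (mul_eq_zero.1 h1).resolve_right hp
    linarith [h2]
  -- conclusion: n = 4
  have hc2 : ∀ k, c (k + 2) = c k := by
    intro k
    have h1 := hc (k + 1)
    have h2 := hc k
    apply mul_left_cancel₀ hα
    rw [show k + 2 = k + 1 + 1 by ring, h1]
    rw [hδα] at h2 ⊢
    linear_combination -h2
  have ha2 : ∀ k, a (k + 2) = a k := fun k => hcainj (hc2 k)
  have hb2 : ∀ k, b (k + 2) = b k := by
    intro k; rw [hbform (k + 2), hbform k, ha2 k]
  have hper4 : ∀ j, A (j + 4) = A j := by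
    intro j
    rcases Nat.even_or_odd j with ⟨l, rfl⟩ | ⟨l, rfl⟩
    · rw [show l + l + 4 = 2 * (l + 2) by ring, show l + l = 2 * l by ring,
        ha (l + 2), ha l, ha2 l]
    · rw [show 2 * l + 1 + 4 = 2 * (l + 2) + 1 by ring, hb (l + 2), hb l, hb2 l]
  have hn4 : n ≤ 4 := hmin 4 (by norm_num) hper4
  refine ⟨by omega, hharm⟩

lemma det2_smul_smul (x y : ℝ) (v : ℝ × ℝ) : det2 (x • v) (y • v) = 0 := by
  simp [det2]; ring

lemma core_exists (g g' : Set (ℝ × ℝ)) (hl : IsLine g) (hl' : IsLine g') (hgg' : g ≠ g')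
    (C C' D D' : ℝ × ℝ) (hCC' : C ≠ C')
    (hCg : C ∉ g) (hCg' : C ∉ g') (hC'g : C' ∉ g) (hC'g' : C' ∉ g')
    (hDg : D ∈ g) (hD'g' : D' ∈ g')
    (hDD' : D ≠ D') (hDC : D ≠ C) (hDC' : D ≠ C') (hD'C : D' ≠ C) (hD'C' : D' ≠ C')
    (s₁ s₂ : ℝ) (hs₁ : D = C + s₁ • (C' - C)) (hs₂ : D' = C + s₂ • (C' - C))
    (hharm : 2 * (s₁ * s₂) = s₁ + s₂) :
    ∃ A : ℕ → ℝ × ℝ,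
      (∀ k, A (k + 4) = A k) ∧
      (∀ j, 0 < j → (∀ k, A (k + j) = A k) → 4 ≤ j) ∧
      (∀ k, A k ≠ A (k + 1)) ∧
      (∀ k, A (2 * k) ∈ g ∧ A (2 * k + 1) ∈ g') ∧
      (∀ k, C ∈ lineThrough (A (2 * k)) (A (2 * k + 1)) ∧
        C' ∈ lineThrough (A (2 * k + 1)) (A (2 * k + 2))) ∧
      ¬ Collinear ℝ (Set.range A) := by
  set e : ℝ × ℝ := C' - C with he_def
  have he : e ≠ 0 := sub_ne_zero.2 hCC'.symm
  have hs₁0 : s₁ ≠ 0 := by rintro rfl; exact hDC (by simpa using hs₁)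
  have hs₂0 : s₂ ≠ 0 := by rintro rfl; exact hD'C (by simpa using hs₂)
  have hs₁1 : s₁ ≠ 1 := by rintro rfl; apply hDC'; rw [hs₁]; simp [he_def]
  have hs₂1 : s₂ ≠ 1 := by rintro rfl; apply hD'C'; rw [hs₂]; simp [he_def]
  obtain ⟨u, hu, hgp⟩ := line_param hl hDg
  obtain ⟨u', hu', hg'p⟩ := line_param hl' hD'g'
  set p : ℝ := det2 e u' with hp_def
  set q : ℝ := det2 u e with hq_def
  set r : ℝ := det2 u u' with hr_def
  have hp : p ≠ 0 := by
    intro h0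
    have hd : det2 u' e = 0 := by
      have : det2 u' e = -det2 e u' := by simp [det2]; ring
      rw [this, ← hp_def, h0, neg_zero]
    obtain ⟨t, ht⟩ := exists_smul_of_det2 hu' hd
    apply hCg'
    rw [hg'p]
    exact ⟨-(s₂ * t), by rw [show C = D' - s₂ • e by rw [hs₂]; abel, ht]; module⟩
  have hq : q ≠ 0 := by
    intro h0
    obtain ⟨t, ht⟩ := exists_smul_of_det2 hu (hq_def ▸ h0)
    apply hCg
    rw [hgp]
    exact ⟨-(s₁ * t), by rw [show C = D - s₁ • e by rw [hs₁]; abel, ht]; module⟩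
  have hswap1 : det2 e u = -q := by simp [det2, hq_def]; ring
  have hswap2 : det2 u' e = -p := by simp [det2, hp_def]; ring
  have hswap3 : det2 u' u = -r := by simp [det2, hr_def]; ring
  set α : ℝ := s₂ * (s₁ - 1) * p with hα_def
  have hα : α ≠ 0 := mul_ne_zero (mul_ne_zero hs₂0 (sub_ne_zero.2 hs₁1)) hp
  have hδα : s₁ * (s₂ - 1) * p + α = 0 := by
    simp only [hα_def]
    linear_combination p * hharm
  -- choice of the starting parameter
  have hchoice : ∃ x : ℝ, x ≠ 0 ∧ α + r * x ≠ 0 ∧ s₁ * p + r * x ≠ 0 ∧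
      2 * α + r * x ≠ 0 ∧ s₁ * p * α + r * x * (s₁ * p - α) ≠ 0 := by
    set x : ℝ := 1 + |α / r| + |s₁ * p / r| + |2 * α / r| +
      |s₁ * p * α / (r * (α - s₁ * p))| with hx_def
    have h1 := abs_nonneg (α / r)
    have h2 := abs_nonneg (s₁ * p / r)
    have h3 := abs_nonneg (2 * α / r)
    have h4 := abs_nonneg (s₁ * p * α / (r * (α - s₁ * p)))
    have hxpos : 0 < x := by simp only [hx_def]; linarith
    have habs : ∀ z : ℝ, z + r * x = 0 → z ≠ 0 → |z / r| < x → False := by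
      intro z hz hz0 hlt
      have hr0 : r ≠ 0 := by
        intro hr; rw [hr, zero_mul, add_zero] at hz; exact hz0 hz
      have haa : x = -(z / r) := by field_simp; linarith
      have : x ≤ |z / r| := by
        rw [haa]
        calc -(z / r) ≤ |(-(z / r))| := le_abs_self _
        _ = |z / r| := abs_neg _
      linarith
    refine ⟨x, ne_of_gt hxpos, ?_, ?_, ?_, ?_⟩
    · exact fun h => habs α h hα (by simp only [hx_def]; linarith)
    · exact fun h => habs (s₁ * p) h (mul_ne_zero hs₁0 hp) (by simp only [hx_def]; linarith)
    · exact fun h => habs (2 * α) h (by positivity) (by simp only [hx_def]; linarith)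
    · intro h
      rcases eq_or_ne (r * (s₁ * p - α)) 0 with h5 | h5
      · have h6 : s₁ * p * α = 0 := by linear_combination h - x * h5
        rcases mul_eq_zero.1 h6 with h7 | h7
        · exact (mul_ne_zero hs₁0 hp) h7
        · exact hα h7
      · have hr0 : r ≠ 0 := fun h6 => h5 (by rw [h6, zero_mul])
        have hsa : α - s₁ * p ≠ 0 := by
          intro h6
          apply h5
          have h7 : s₁ * p - α = 0 := by linarith
          rw [h7, mul_zero]
        have hxeq : x = s₁ * p * α / (r * (α - s₁ * p)) := by
          rw [eq_div_iff (mul_ne_zero hr0 hsa)]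
          linear_combination -h
        have h6 : x ≤ |s₁ * p * α / (r * (α - s₁ * p))| := hxeq ▸ le_abs_self _
        simp only [hx_def] at h6
        linarith
  obtain ⟨a₀, ha₀0, cond2, cond3, cond4, cond5n⟩ := hchoice
  obtain ⟨a₁, ha₁eq⟩ : ∃ x : ℝ, x = -(α * a₀) / (α + r * a₀) := ⟨_, rfl⟩
  have ha₁0 : a₁ ≠ 0 := by
    rw [ha₁eq]
    exact div_ne_zero (neg_ne_zero.2 (mul_ne_zero hα ha₀0)) cond2
  have hrel : -(α * a₁) - α * a₀ - r * a₀ * a₁ = 0 := by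
    rw [ha₁eq]; linear_combination (α * a₀) * mul_inv_cancel₀ cond2
  have ha₁a₀ : a₁ ≠ a₀ := by
    intro h
    rw [h] at hrel
    have h2 : a₀ * (2 * α + r * a₀) = 0 := by linear_combination -hrel
    rcases mul_eq_zero.1 h2 with h3 | h3
    · exact ha₀0 h3
    · exact cond4 h3
  have hfact : (s₁ * p + r * a₁) * (α + r * a₀) = s₁ * p * α + r * a₀ * (s₁ * p - α) := by
    rw [ha₁eq]; field_simp; ring
  have cond5 : s₁ * p + r * a₁ ≠ 0 := by
    intro h
    apply cond5n
    rw [h, zero_mul] at hfact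
    linear_combination -hfact
  obtain ⟨b₀, hb₀eq⟩ : ∃ x : ℝ, x = -(s₂ * q * a₀) / (s₁ * p + r * a₀) := ⟨_, rfl⟩
  obtain ⟨b₁, hb₁eq⟩ : ∃ x : ℝ, x = -(s₂ * q * a₁) / (s₁ * p + r * a₁) := ⟨_, rfl⟩
  have hR1₀ : s₁ * b₀ * p + s₂ * a₀ * q + a₀ * b₀ * r = 0 := by
    rw [hb₀eq]; linear_combination (-(s₂ * q * a₀)) * mul_inv_cancel₀ cond3
  have hR1₁ : s₁ * b₁ * p + s₂ * a₁ * q + a₁ * b₁ * r = 0 := by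
    rw [hb₁eq]; linear_combination (-(s₂ * q * a₁)) * mul_inv_cancel₀ cond5
  have hR2₀ : (s₂ - 1) * q * a₁ + (s₁ - 1) * p * b₀ + r * a₁ * b₀ = 0 := by
    have h0 : (s₁ * p + r * a₀) * ((s₂ - 1) * q * a₁ + (s₁ - 1) * p * b₀ + r * a₁ * b₀) = 0 := by
      linear_combination ((s₁ - 1) * p + r * a₁) * hR1₀ + q * hrel + q * a₁ * hδα
    exact (mul_eq_zero.1 h0).resolve_left cond3
  have hrel' : -(α * a₀) - α * a₁ - r * a₁ * a₀ = 0 := by linear_combination hrel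
  have hR2₁ : (s₂ - 1) * q * a₀ + (s₁ - 1) * p * b₁ + r * a₀ * b₁ = 0 := by
    have h0 : (s₁ * p + r * a₁) * ((s₂ - 1) * q * a₀ + (s₁ - 1) * p * b₁ + r * a₀ * b₁) = 0 := by
      linear_combination ((s₁ - 1) * p + r * a₀) * hR1₁ + q * hrel' + q * a₀ * hδα
    exact (mul_eq_zero.1 h0).resolve_left cond5
  -- the four vertices
  obtain ⟨P₀, hP₀_def⟩ : ∃ x : ℝ × ℝ, x = D + a₀ • u := ⟨_, rfl⟩
  obtain ⟨Q₀, hQ₀_def⟩ : ∃ x : ℝ × ℝ, x = D' + b₀ • u' := ⟨_, rfl⟩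
  obtain ⟨P₁, hP₁_def⟩ : ∃ x : ℝ × ℝ, x = D + a₁ • u := ⟨_, rfl⟩
  obtain ⟨Q₁, hQ₁_def⟩ : ∃ x : ℝ × ℝ, x = D' + b₁ • u' := ⟨_, rfl⟩
  have hP₀g : P₀ ∈ g := by rw [hgp, hP₀_def]; exact ⟨a₀, rfl⟩
  have hP₁g : P₁ ∈ g := by rw [hgp, hP₁_def]; exact ⟨a₁, rfl⟩
  have hQ₀g' : Q₀ ∈ g' := by rw [hg'p, hQ₀_def]; exact ⟨b₀, rfl⟩
  have hQ₁g' : Q₁ ∈ g' := by rw [hg'p, hQ₁_def]; exact ⟨b₁, rfl⟩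
  have hP₀P₁ : P₀ ≠ P₁ := by
    intro h
    apply ha₁a₀
    symm
    rw [hP₀_def, hP₁_def] at h
    have h1 : a₀ • u = a₁ • u := add_left_cancel h
    have h2 : (a₀ - a₁) • u = 0 := by rw [sub_smul, h1, sub_self]
    exact sub_eq_zero.1 ((smul_eq_zero.1 h2).resolve_right hu)
  -- expressions relative to C and C'
  have hPC : ∀ x : ℝ, D + x • u = C + (s₁ • e + x • u) := by
    intro x; rw [hs₁]; abel
  have hQC : ∀ x : ℝ, D' + x • u' = C + (s₂ • e + x • u') := by
    intro x; rw [hs₂]; abel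
  have hCC'e : C' = C + (1 : ℝ) • e := by simp [he_def]
  have hPC' : ∀ x : ℝ, D + x • u = C' + ((s₁ - 1) • e + x • u) := by
    intro x; rw [hs₁, hCC'e, sub_smul]; abel
  have hQC' : ∀ x : ℝ, D' + x • u' = C' + ((s₂ - 1) • e + x • u') := by
    intro x; rw [hs₂, hCC'e, sub_smul]; abel
  -- incidence determinants
  have hdet₀ : det2 (Q₀ - P₀) (C - P₀) = 0 := by
    rw [hP₀_def, hQ₀_def, hPC a₀, hQC b₀, det2_expand' C e u u' s₁ a₀ s₂ b₀,
      ← hp_def, ← hq_def, ← hr_def]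
    linear_combination hR1₀
  have hdet₁ : det2 (P₁ - Q₀) (C' - Q₀) = 0 := by
    rw [hP₁_def, hQ₀_def, hPC' a₁, hQC' b₀,
      det2_expand' C' e u' u (s₂ - 1) b₀ (s₁ - 1) a₁, hswap1, hswap2, hswap3]
    linear_combination -hR2₀
  have hdet₂ : det2 (Q₁ - P₁) (C - P₁) = 0 := by
    rw [hP₁_def, hQ₁_def, hPC a₁, hQC b₁, det2_expand' C e u u' s₁ a₁ s₂ b₁,
      ← hp_def, ← hq_def, ← hr_def]
    linear_combination hR1₁
  have hdet₃ : det2 (P₀ - Q₁) (C' - Q₁) = 0 := by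
    rw [hP₀_def, hQ₁_def, hPC' a₀, hQC' b₁,
      det2_expand' C' e u' u (s₂ - 1) b₁ (s₁ - 1) a₀, hswap1, hswap2, hswap3]
    linear_combination -hR2₁
  -- distinctness of consecutive vertices
  have hP₀Q₀ : P₀ ≠ Q₀ := by
    intro h
    have hQ₀g : Q₀ ∈ g := h ▸ hP₀g
    rcases eq_or_ne P₁ Q₀ with h1 | h1
    · exact hP₀P₁ (h.trans h1.symm)
    · have hC'mem : C' ∈ lineThrough Q₀ P₁ := mem_of_det2 h1.symm hdet₁
      have : g = lineThrough Q₀ P₁ := line_eq_lineThrough hl hQ₀g hP₁g h1.symm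
      exact hC'g (this ▸ hC'mem)
  have hQ₀P₁ : Q₀ ≠ P₁ := by
    intro h
    have hQ₀g : Q₀ ∈ g := h ▸ hP₁g
    have hCmem : C ∈ lineThrough P₀ Q₀ := mem_of_det2 hP₀Q₀ hdet₀
    have : g = lineThrough P₀ Q₀ := line_eq_lineThrough hl hP₀g hQ₀g hP₀Q₀
    exact hCg (this ▸ hCmem)
  have hP₁Q₁ : P₁ ≠ Q₁ := by
    intro h
    have hQ₁g : Q₁ ∈ g := h ▸ hP₁g
    rcases eq_or_ne P₀ Q₁ with h1 | h1
    · exact hP₀P₁ (h1.trans h.symm)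
    · have hC'mem : C' ∈ lineThrough Q₁ P₀ := mem_of_det2 h1.symm hdet₃
      have : g = lineThrough Q₁ P₀ := line_eq_lineThrough hl hQ₁g hP₀g h1.symm
      exact hC'g (this ▸ hC'mem)
  have hQ₁P₀ : Q₁ ≠ P₀ := by
    intro h
    have hQ₁g : Q₁ ∈ g := h ▸ hP₀g
    have hCmem : C ∈ lineThrough P₁ Q₁ := mem_of_det2 hP₁Q₁ hdet₂
    have : g = lineThrough P₁ Q₁ := line_eq_lineThrough hl hP₁g hQ₁g hP₁Q₁
    exact hCg (this ▸ hCmem)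
  -- the polygon
  obtain ⟨A, hA_def⟩ : ∃ A : ℕ → ℝ × ℝ, A = fun k =>
      if k % 4 = 0 then P₀ else if k % 4 = 1 then Q₀ else if k % 4 = 2 then P₁ else Q₁ :=
    ⟨_, rfl⟩
  have hA0 : ∀ j, A (4 * j) = P₀ := by intro j; simp [hA_def, Nat.mul_mod_right]
  have hA1 : ∀ j, A (4 * j + 1) = Q₀ := by intro j; simp [hA_def, Nat.mul_add_mod]
  have hA2 : ∀ j, A (4 * j + 2) = P₁ := by intro j; simp [hA_def, Nat.mul_add_mod]
  have hA3 : ∀ j, A (4 * j + 3) = Q₁ := by intro j; simp [hA_def, Nat.mul_add_mod]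
  have hdecomp : ∀ k : ℕ, ∃ j i, i < 4 ∧ k = 4 * j + i :=
    fun k => ⟨k / 4, k % 4, Nat.mod_lt _ (by norm_num), (Nat.div_add_mod k 4).symm⟩
  refine ⟨A, ?_, ?_, ?_, ?_, ?_, ?_⟩
  · -- periodicity
    intro k
    obtain ⟨j, i, hi, rfl⟩ := hdecomp k
    interval_cases i
    · rw [show 4 * j + 0 + 4 = 4 * (j + 1) by ring, show 4 * j + 0 = 4 * j by ring, hA0, hA0]
    · rw [show 4 * j + 1 + 4 = 4 * (j + 1) + 1 by ring, hA1, hA1]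
    · rw [show 4 * j + 2 + 4 = 4 * (j + 1) + 2 by ring, hA2, hA2]
    · rw [show 4 * j + 3 + 4 = 4 * (j + 1) + 3 by ring, hA3, hA3]
  · -- minimality
    intro j hj hperj
    by_contra hlt
    push_neg at hlt
    interval_cases j
    · have h := hperj 0
      rw [show (0 : ℕ) + 1 = 4 * 0 + 1 by ring] at h
      rw [hA1] at h
      have h0 : A 0 = P₀ := by rw [show (0 : ℕ) = 4 * 0 by ring, hA0]
      rw [h0] at h
      exact hP₀Q₀ h.symm
    · have h := hperj 0
      rw [show (0 : ℕ) + 2 = 4 * 0 + 2 by ring] at h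
      rw [hA2] at h
      have h0 : A 0 = P₀ := by rw [show (0 : ℕ) = 4 * 0 by ring, hA0]
      rw [h0] at h
      exact hP₀P₁ h.symm
    · have h := hperj 0
      rw [show (0 : ℕ) + 3 = 4 * 0 + 3 by ring] at h
      rw [hA3] at h
      have h0 : A 0 = P₀ := by rw [show (0 : ℕ) = 4 * 0 by ring, hA0]
      rw [h0] at h
      exact hQ₁P₀ h
  · -- consecutive distinct
    intro k
    obtain ⟨j, i, hi, rfl⟩ := hdecomp k
    interval_cases i
    · rw [show 4 * j + 0 + 1 = 4 * j + 1 by ring, show 4 * j + 0 = 4 * j by ring, hA0, hA1]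
      exact hP₀Q₀
    · rw [show 4 * j + 1 + 1 = 4 * j + 2 by ring, hA1, hA2]
      exact hQ₀P₁
    · rw [show 4 * j + 2 + 1 = 4 * j + 3 by ring, hA2, hA3]
      exact hP₁Q₁
    · rw [show 4 * j + 3 + 1 = 4 * (j + 1) by ring, hA3, hA0]
      exact hQ₁P₀
  · -- membership
    intro k
    rcases Nat.even_or_odd k with ⟨l, rfl⟩ | ⟨l, rfl⟩
    · refine ⟨?_, ?_⟩
      · rw [show 2 * (l + l) = 4 * l by ring, hA0]; exact hP₀g
      · rw [show 2 * (l + l) + 1 = 4 * l + 1 by ring, hA1]; exact hQ₀g'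
    · refine ⟨?_, ?_⟩
      · rw [show 2 * (2 * l + 1) = 4 * l + 2 by ring, hA2]; exact hP₁g
      · rw [show 2 * (2 * l + 1) + 1 = 4 * l + 3 by ring, hA3]; exact hQ₁g'
  · -- side incidences
    intro k
    rcases Nat.even_or_odd k with ⟨l, rfl⟩ | ⟨l, rfl⟩
    · refine ⟨?_, ?_⟩
      · rw [show 2 * (l + l) + 1 = 4 * l + 1 by ring, show 2 * (l + l) = 4 * l by ring,
          hA0, hA1]
        exact mem_of_det2 hP₀Q₀ hdet₀
      · rw [show 2 * (l + l) + 2 = 4 * l + 2 by ring,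
          show 2 * (l + l) + 1 = 4 * l + 1 by ring, hA1, hA2]
        exact mem_of_det2 hQ₀P₁ hdet₁
    · refine ⟨?_, ?_⟩
      · rw [show 2 * (2 * l + 1) + 1 = 4 * l + 3 by ring,
          show 2 * (2 * l + 1) = 4 * l + 2 by ring, hA2, hA3]
        exact mem_of_det2 hP₁Q₁ hdet₂
      · rw [show 2 * (2 * l + 1) + 2 = 4 * (l + 1) by ring,
          show 2 * (2 * l + 1) + 1 = 4 * l + 3 by ring, hA3, hA0]
        exact mem_of_det2 hQ₁P₀ hdet₃
  · -- not collinear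
    intro hcol
    obtain ⟨p₀, v, hv⟩ := (collinear_iff_exists_forall_eq_smul_vadd (k := ℝ)
      (s := Set.range A)).1 hcol
    obtain ⟨r₀, hr₀⟩ := hv P₀ ⟨0, by rw [show (0 : ℕ) = 4 * 0 by ring, hA0]⟩
    obtain ⟨r₁, hr₁⟩ := hv Q₀ ⟨1, by rw [show (1 : ℕ) = 4 * 0 + 1 by ring, hA1]⟩
    obtain ⟨r₂, hr₂⟩ := hv P₁ ⟨2, by rw [show (2 : ℕ) = 4 * 0 + 2 by ring, hA2]⟩
    have hd1 : det2 (P₁ - P₀) (Q₀ - P₀) = 0 := by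
      rw [hr₀, hr₁, hr₂]
      have e1 : (r₂ • v +ᵥ p₀ : ℝ × ℝ) - (r₀ • v +ᵥ p₀) = (r₂ - r₀) • v := by
        rw [vadd_eq_add, vadd_eq_add, sub_smul]; abel
      have e2 : (r₁ • v +ᵥ p₀ : ℝ × ℝ) - (r₀ • v +ᵥ p₀) = (r₁ - r₀) • v := by
        rw [vadd_eq_add, vadd_eq_add, sub_smul]; abel
      rw [e1, e2, det2_smul_smul]
    have hd2 : P₁ - P₀ = (a₁ - a₀) • u := by
      rw [hP₀_def, hP₁_def, sub_smul]; abel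
    have hd3 : (a₁ - a₀) * det2 u (Q₀ - P₀) = 0 := by
      rw [← hd1, hd2]
      simp only [det2, Prod.smul_fst, Prod.smul_snd, smul_eq_mul]
      ring
    have hd4 : det2 u (Q₀ - P₀) = 0 :=
      (mul_eq_zero.1 hd3).resolve_left (sub_ne_zero.2 ha₁a₀)
    obtain ⟨t, ht⟩ := exists_smul_of_det2 hu hd4
    have hQ₀g : Q₀ ∈ g := by
      rw [hgp]
      refine ⟨a₀ + t, ?_⟩
      have h5 : Q₀ = P₀ + t • u := by rw [← ht]; abel
      rw [h5, hP₀_def, add_smul]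
      abel
    have hCmem : C ∈ lineThrough P₀ Q₀ := mem_of_det2 hP₀Q₀ hdet₀
    have hgeq : g = lineThrough P₀ Q₀ := line_eq_lineThrough hl hP₀g hQ₀g hP₀Q₀
    exact hCg (hgeq ▸ hCmem)

/-- Let `g₁ ≠ g₂` be lines and `C₁ ≠ C₂` points off `g₁ ∪ g₂`, such that
the line `C₁C₂` meets `g₁` at `D₁` and `g₂` at `D₂`, with `D₁, D₂, C₁, C₂` pairwise distinct
(`t₁`, `t₂` are the affine parameters of `D₁`, `D₂` on the line `C₁C₂`, where `C₁`, `C₂` have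
parameters `0`, `1`). For a positive integer `n`, there is a closed polygonal line with `n`
sides, not all of whose vertices are collinear, with vertices alternately on `g₁`, `g₂` and
side lines alternately through `C₁`, `C₂`, iff `n = 4` and the pair `(D₁, D₂)` is
harmonically conjugate to `(C₁, C₂)`, i.e. the cross-ratio `(C₁, C₂; D₁, D₂)` equals `−1`. -/
theorem statement15 (g₁ g₂ : Set (ℝ × ℝ)) (hl₁ : IsLine g₁) (hl₂ : IsLine g₂)
    (hg : g₁ ≠ g₂)
    (C₁ C₂ D₁ D₂ : ℝ × ℝ) (hC : C₁ ≠ C₂)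
    (hC₁ : C₁ ∉ g₁ ∪ g₂) (hC₂ : C₂ ∉ g₁ ∪ g₂)
    (hD₁ : D₁ ∈ g₁) (hD₂ : D₂ ∈ g₂)
    (hdist : D₁ ≠ D₂ ∧ D₁ ≠ C₁ ∧ D₁ ≠ C₂ ∧ D₂ ≠ C₁ ∧ D₂ ≠ C₂)
    (t₁ t₂ : ℝ) (ht₁ : D₁ = C₁ + t₁ • (C₂ - C₁)) (ht₂ : D₂ = C₁ + t₂ • (C₂ - C₁))
    (n : ℕ) (hn : 0 < n) :
    (∃ A : ℕ → ℝ × ℝ,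
        (∀ k, A (k + n) = A k) ∧
        (∀ j : ℕ, 0 < j → (∀ k, A (k + j) = A k) → n ≤ j) ∧
        (∀ k, A k ≠ A (k + 1)) ∧
        ((∀ k : ℕ, A (2 * k) ∈ g₁ ∧ A (2 * k + 1) ∈ g₂) ∨
          (∀ k : ℕ, A (2 * k) ∈ g₂ ∧ A (2 * k + 1) ∈ g₁)) ∧
        ((∀ k : ℕ, C₁ ∈ lineThrough (A (2 * k)) (A (2 * k + 1)) ∧
            C₂ ∈ lineThrough (A (2 * k + 1)) (A (2 * k + 2))) ∨
          (∀ k : ℕ, C₂ ∈ lineThrough (A (2 * k)) (A (2 * k + 1)) ∧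
            C₁ ∈ lineThrough (A (2 * k + 1)) (A (2 * k + 2)))) ∧
        ¬ Collinear ℝ (Set.range A)) ↔
      (n = 4 ∧ ((0 - t₁) * (1 - t₂)) / ((0 - t₂) * (1 - t₁)) = -1) := by
  obtain ⟨hDD', hD₁C₁, hD₁C₂, hD₂C₁, hD₂C₂⟩ := hdist
  have hC₁g₁ : C₁ ∉ g₁ := fun h => hC₁ (Or.inl h)
  have hC₁g₂ : C₁ ∉ g₂ := fun h => hC₁ (Or.inr h)
  have hC₂g₁ : C₂ ∉ g₁ := fun h => hC₂ (Or.inl h)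
  have hC₂g₂ : C₂ ∉ g₂ := fun h => hC₂ (Or.inr h)
  have ht₁0 : t₁ ≠ 0 := by rintro rfl; exact hD₁C₁ (by simpa using ht₁)
  have ht₂0 : t₂ ≠ 0 := by rintro rfl; exact hD₂C₁ (by simpa using ht₂)
  have ht₁1 : t₁ ≠ 1 := by rintro rfl; apply hD₁C₂; rw [ht₁]; simp
  have ht₂1 : t₂ ≠ 1 := by rintro rfl; apply hD₂C₂; rw [ht₂]; simp
  have hden : (0 - t₂) * (1 - t₁) ≠ 0 :=
    mul_ne_zero (by simpa using ht₂0) (sub_ne_zero.2 (Ne.symm ht₁1))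
  have hcr : (((0 - t₁) * (1 - t₂)) / ((0 - t₂) * (1 - t₁)) = -1) ↔
      2 * (t₁ * t₂) = t₁ + t₂ := by
    rw [div_eq_iff hden]
    constructor <;> intro h <;> nlinarith [h]
  constructor
  · rintro ⟨A, hper, hmin, hne, hmemor, hsideor, hnc⟩
    -- properties of the shifted sequence
    set B : ℕ → ℝ × ℝ := fun k => A (k + 1) with hB_def
    have hperB : ∀ k, B (k + n) = B k := by
      intro k
      simp only [hB_def]
      rw [show k + n + 1 = k + 1 + n by ring, hper]
    have hneB : ∀ k, B k ≠ B (k + 1) := fun k => hne (k + 1)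
    have hminB : ∀ j, 0 < j → (∀ k, B (k + j) = B k) → n ≤ j := by
      intro j hj hB
      apply hmin j hj
      intro k
      match k with
      | 0 =>
        have h1 : A (0 + j) = A (j + n) := by rw [Nat.zero_add, hper j]
        have h2 : A (j + n) = A (n - 1 + j + 1) := by congr 1; omega
        have h3 : B (n - 1 + j) = B (n - 1) := hB (n - 1)
        have h4 : A (n - 1 + j + 1) = A (n - 1 + 1) := h3
        have h5 : A (n - 1 + 1) = A n := by congr 1; omega
        have h6 : A n = A 0 := by rw [show n = 0 + n by omega, hper]
        rw [h1, h2, h4, h5, h6]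
      | k + 1 =>
        have h := hB k
        simp only [hB_def] at h
        rwa [show k + j + 1 = k + 1 + j by omega] at h
    have hrangeB : Set.range A ⊆ Set.range B := by
      rintro x ⟨k, rfl⟩
      refine ⟨k + n - 1, ?_⟩
      simp only [hB_def]
      rw [show k + n - 1 + 1 = k + n by omega, hper]
    have hncB : ¬ Collinear ℝ (Set.range B) := fun h => hnc (h.subset hrangeB)
    rcases hsideor with hside | hside
    · rcases hmemor with hmem | hmem
      · -- g₁ first, C₁ first
        obtain ⟨hn4, hh⟩ := core_forward g₁ g₂ hl₁ hl₂ hg C₁ C₂ D₁ D₂ hC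
          hC₁g₁ hC₁g₂ hC₂g₁ hC₂g₂ hD₁ hD₂ hDD' hD₁C₁ hD₁C₂ hD₂C₁ hD₂C₂
          t₁ t₂ ht₁ ht₂ n hn A hper hmin hne hmem hside hnc
        exact ⟨hn4, hcr.2 (by linarith)⟩
      · -- g₂ first, C₁ first
        obtain ⟨hn4, hh⟩ := core_forward g₂ g₁ hl₂ hl₁ hg.symm C₁ C₂ D₂ D₁ hC
          hC₁g₂ hC₁g₁ hC₂g₂ hC₂g₁ hD₂ hD₁ hDD'.symm hD₂C₁ hD₂C₂ hD₁C₁ hD₁C₂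
          t₂ t₁ ht₂ ht₁ n hn A hper hmin hne hmem hside hnc
        exact ⟨hn4, hcr.2 (by linarith)⟩
    · rcases hmemor with hmem | hmem
      · -- g₁ first, C₂ first: shift
        have hmemB : ∀ k, B (2 * k) ∈ g₂ ∧ B (2 * k + 1) ∈ g₁ := by
          intro k
          constructor
          · show A (2 * k + 1) ∈ g₂
            exact (hmem k).2
          · show A (2 * k + 1 + 1) ∈ g₁
            rw [show 2 * k + 1 + 1 = 2 * (k + 1) by ring]
            exact (hmem (k + 1)).1
        have hsideB : ∀ k, C₁ ∈ lineThrough (B (2 * k)) (B (2 * k + 1)) ∧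
            C₂ ∈ lineThrough (B (2 * k + 1)) (B (2 * k + 2)) := by
          intro k
          constructor
          · show C₁ ∈ lineThrough (A (2 * k + 1)) (A (2 * k + 1 + 1))
            have := (hside k).2
            rwa [show 2 * k + 2 = 2 * k + 1 + 1 by ring] at this
          · show C₂ ∈ lineThrough (A (2 * k + 1 + 1)) (A (2 * k + 2 + 1))
            have h := (hside (k + 1)).1
            rw [show 2 * (k + 1) = 2 * k + 1 + 1 by omega] at h
            rwa [show 2 * k + 2 + 1 = 2 * k + 1 + 1 + 1 by omega]
        obtain ⟨hn4, hh⟩ := core_forward g₂ g₁ hl₂ hl₁ hg.symm C₁ C₂ D₂ D₁ hC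
          hC₁g₂ hC₁g₁ hC₂g₂ hC₂g₁ hD₂ hD₁ hDD'.symm hD₂C₁ hD₂C₂ hD₁C₁ hD₁C₂
          t₂ t₁ ht₂ ht₁ n hn B hperB hminB hneB hmemB hsideB hncB
        exact ⟨hn4, hcr.2 (by linarith)⟩
      · -- g₂ first, C₂ first: shift
        have hmemB : ∀ k, B (2 * k) ∈ g₁ ∧ B (2 * k + 1) ∈ g₂ := by
          intro k
          constructor
          · show A (2 * k + 1) ∈ g₁
            exact (hmem k).2
          · show A (2 * k + 1 + 1) ∈ g₂
            rw [show 2 * k + 1 + 1 = 2 * (k + 1) by ring]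
            exact (hmem (k + 1)).1
        have hsideB : ∀ k, C₁ ∈ lineThrough (B (2 * k)) (B (2 * k + 1)) ∧
            C₂ ∈ lineThrough (B (2 * k + 1)) (B (2 * k + 2)) := by
          intro k
          constructor
          · show C₁ ∈ lineThrough (A (2 * k + 1)) (A (2 * k + 1 + 1))
            have := (hside k).2
            rwa [show 2 * k + 2 = 2 * k + 1 + 1 by ring] at this
          · show C₂ ∈ lineThrough (A (2 * k + 1 + 1)) (A (2 * k + 2 + 1))
            have h := (hside (k + 1)).1
            rw [show 2 * (k + 1) = 2 * k + 1 + 1 by omega] at h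
            rwa [show 2 * k + 2 + 1 = 2 * k + 1 + 1 + 1 by omega]
        obtain ⟨hn4, hh⟩ := core_forward g₁ g₂ hl₁ hl₂ hg C₁ C₂ D₁ D₂ hC
          hC₁g₁ hC₁g₂ hC₂g₁ hC₂g₂ hD₁ hD₂ hDD' hD₁C₁ hD₁C₂ hD₂C₁ hD₂C₂
          t₁ t₂ ht₁ ht₂ n hn B hperB hminB hneB hmemB hsideB hncB
        exact ⟨hn4, hcr.2 (by linarith)⟩
  · rintro ⟨rfl, hratio⟩
    have hharm : 2 * (t₁ * t₂) = t₁ + t₂ := hcr.1 hratio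
    obtain ⟨A, h1, h2, h3, h4, h5, h6⟩ := core_exists g₁ g₂ hl₁ hl₂ hg C₁ C₂ D₁ D₂ hC
      hC₁g₁ hC₁g₂ hC₂g₁ hC₂g₂ hD₁ hD₂ hDD' hD₁C₁ hD₁C₂ hD₂C₁ hD₂C₂
      t₁ t₂ ht₁ ht₂ hharm
    exact ⟨A, h1, h2, h3, Or.inl h4, Or.inl h5, h6⟩
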